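/- Let μ, ξ > 0 with 8μ ≠ ξ and 2μ ≠ ξ, and let ζ, ζᵢ be real. Then the function V(y) = (ζ/(8μ−ξ))·(2e^{2y} − (√ξ/√(2μ))·e^{√ξ·y/√(2μ)}) + (ζᵢ/(2μ−ξ))·((√(2μ)/√ξ)·e^{√ξ·y/√(2μ)} − e^y) satisfies the ODE 2μV''(y) − ξV(y) − 2ζe^{2y} + ζᵢe^y = 0 for all y < 0, the boundary condition 2μV'(0) = ζ, and V(y) → 0 as y → −∞. -/

import Mathlib

/-!
With `k = √ξ / √(2μ)`, `V` is a combination of `e^{2y}`, `e^{ky}` and `e^y`. The operator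
`2μ D² - ξ` multiplies `e^{λy}` by `2μλ² - ξ`: this kills `e^{ky}` since `2μk² = ξ`, while the
coefficients of `e^{2y}` and `e^y` are exactly the particular solutions for the two forcing terms.
All three rates are positive, so `V → 0` at `-∞`, and the coefficient of `e^{ky}` is tuned so
that the boundary condition at `0` holds.
-/

noncomputable def Vflat (μ ξ ζ ζi : ℝ) : ℝ → ℝ := fun y =>
  ζ / (8 * μ - ξ) * (2 * Real.exp (2 * y)
      - Real.sqrt ξ / Real.sqrt (2 * μ) * Real.exp (Real.sqrt ξ * y / Real.sqrt (2 * μ)))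
  + ζi / (2 * μ - ξ) * (Real.sqrt (2 * μ) / Real.sqrt ξ
      * Real.exp (Real.sqrt ξ * y / Real.sqrt (2 * μ)) - Real.exp y)

open Real Filter Topology

section ExpSum

variable {ι : Type*} (s : Finset ι) (c r : ι → ℝ)

theorem hasDerivAt_sum_mul_exp (y : ℝ) :
    HasDerivAt (fun y ↦ ∑ i ∈ s, c i * exp (r i * y)) (∑ i ∈ s, c i * r i * exp (r i * y)) y :=
  HasDerivAt.fun_sum fun i _ ↦ by
    simpa [mul_comm, mul_assoc] using (((hasDerivAt_id y).const_mul (r i)).exp).const_mul (c i)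

theorem deriv_sum_mul_exp :
    deriv (fun y ↦ ∑ i ∈ s, c i * exp (r i * y)) = fun y ↦ ∑ i ∈ s, c i * r i * exp (r i * y) :=
  funext fun y ↦ (hasDerivAt_sum_mul_exp s c r y).deriv

theorem deriv_deriv_sum_mul_exp :
    deriv (deriv fun y ↦ ∑ i ∈ s, c i * exp (r i * y)) =
      fun y ↦ ∑ i ∈ s, c i * r i ^ 2 * exp (r i * y) := by
  rw [deriv_sum_mul_exp]
  exact (deriv_sum_mul_exp s (fun i ↦ c i * r i) r).trans (by simp only [sq, mul_assoc])

theorem tendsto_sum_mul_exp_atBot (hr : ∀ i ∈ s, 0 < r i) :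
    Tendsto (fun y ↦ ∑ i ∈ s, c i * exp (r i * y)) atBot (𝓝 0) := by
  simpa using tendsto_finsetSum s fun i hi ↦
    (tendsto_exp_atBot.comp (tendsto_id.const_mul_atBot (hr i hi))).const_mul (c i)

end ExpSum

noncomputable def flatRate (μ ξ : ℝ) : ℝ := √ξ / √(2 * μ)

theorem flatRate_pos {μ ξ : ℝ} (hμ : 0 < μ) (hξ : 0 < ξ) : 0 < flatRate μ ξ := by
  unfold flatRate; positivity

theorem two_mul_mul_flatRate_sq {μ ξ : ℝ} (hμ : 0 < μ) (hξ : 0 ≤ ξ) :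
    2 * μ * flatRate μ ξ ^ 2 = ξ := by
  rw [flatRate, div_pow, sq_sqrt hξ, sq_sqrt (by positivity)]
  field_simp

theorem Vflat_eq_sum (μ ξ ζ ζi : ℝ) :
    Vflat μ ξ ζ ζi = fun y ↦ ∑ i,
      ![2 * (ζ / (8 * μ - ξ)),
        ζi / (2 * μ - ξ) / flatRate μ ξ - ζ / (8 * μ - ξ) * flatRate μ ξ,
        -(ζi / (2 * μ - ξ))] i * exp (![2, flatRate μ ξ, 1] i * y) := by
  funext y
  simp only [Vflat, Fin.sum_univ_three, Matrix.cons_val_zero, Matrix.cons_val_one,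
    Matrix.cons_val_two, Matrix.head_cons, Matrix.tail_cons, flatRate, one_mul]
  rw [← inv_div (√ξ), mul_div_right_comm]
  ring

/-- The flat-front vertical velocity V solves 2μV'' − ξV − 2ζe^{2y} + ζᵢe^y = 0 for y < 0,
satisfies 2μV'(0) = ζ, and vanishes at −∞. -/
theorem Vflat_solves (μ ξ ζ ζi : ℝ) (hμ : 0 < μ) (hξ : 0 < ξ)
    (h8 : 8 * μ ≠ ξ) (h2 : 2 * μ ≠ ξ) :
    (∀ y < (0 : ℝ),
      2 * μ * deriv (deriv (Vflat μ ξ ζ ζi)) y - ξ * Vflat μ ξ ζ ζi y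
        - 2 * ζ * Real.exp (2 * y) + ζi * Real.exp y = 0) ∧
    2 * μ * deriv (Vflat μ ξ ζ ζi) 0 = ζ ∧
    Filter.Tendsto (Vflat μ ξ ζ ζi) Filter.atBot (nhds 0) := by
  have hk := two_mul_mul_flatRate_sq hμ hξ.le
  have hk0 := (flatRate_pos hμ hξ).ne'
  have hA : ζ / (8 * μ - ξ) * (8 * μ - ξ) = ζ := div_mul_cancel₀ _ (sub_ne_zero.2 h8)
  have hB : ζi / (2 * μ - ξ) * (2 * μ - ξ) = ζi := div_mul_cancel₀ _ (sub_ne_zero.2 h2)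
  rw [Vflat_eq_sum]
  set k := flatRate μ ξ
  set A := ζ / (8 * μ - ξ)
  set B := ζi / (2 * μ - ξ)
  refine ⟨fun y _ ↦ ?_, ?_, ?_⟩
  · rw [deriv_deriv_sum_mul_exp]
    simp only [Fin.sum_univ_three, Matrix.cons_val_zero, Matrix.cons_val_one,
      Matrix.cons_val_two, Matrix.head_cons, Matrix.tail_cons, one_mul]
    linear_combination 2 * exp (2 * y) * hA - exp y * hB + (B / k - A * k) * exp (k * y) * hk
  · rw [deriv_sum_mul_exp]
    simp only [Fin.sum_univ_three, Matrix.cons_val_zero, Matrix.cons_val_one,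
      Matrix.cons_val_two, Matrix.head_cons, Matrix.tail_cons, mul_zero, exp_zero, mul_one]
    linear_combination hA - A * hk + 2 * μ * B * (div_mul_cancel₀ 1 hk0)
  · exact tendsto_sum_mul_exp_atBot _ _ _ fun i _ ↦ by
      fin_cases i <;> simp [k, flatRate_pos hμ hξ]
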